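/- ∑_{h=0}^{n} (number of partial Motzkin paths of length n ending at height h) · (h+1) = 3^n, where a partial Motzkin path is a word in {U,D,H} of length n all of whose prefixes have at least as many U's as D's, and it ends at height h = #U - #D. -/

import Mathlib

/-- A Motzkin step: up, down, or horizontal. -/
inductive Step | U | D | H
deriving DecidableEq

instance : Fintype Step :=
  ⟨{Step.U, Step.D, Step.H}, fun x => by cases x <;> simp⟩

/-- The height change of one step. -/
def Step.val : Step → ℤ
  | Step.U => 1
  | Step.D => -1
  | Step.H => 0

/-- The weight of a step: up steps weigh `1`, down steps `t`, horizontal steps `k`. -/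
def Step.wt (k t : ℕ) : Step → ℕ
  | Step.U => 1
  | Step.D => t
  | Step.H => k

/-- The height of the path `p` after its first `m` steps. -/
def pathHeight {n : ℕ} (p : Fin n → Step) (m : ℕ) : ℤ :=
  ∑ i ∈ Finset.univ.filter (fun i : Fin n => (i : ℕ) < m), (p i).val

/-- A partial Motzkin path: never goes below the x-axis. -/
def IsPartialMotzkin {n : ℕ} (p : Fin n → Step) : Prop :=
  ∀ m ≤ n, 0 ≤ pathHeight p m

/-- A (complete) Motzkin path: never below the x-axis and ends on the x-axis. -/
def IsMotzkin {n : ℕ} (p : Fin n → Step) : Prop :=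
  IsPartialMotzkin p ∧ pathHeight p n = 0

instance {n : ℕ} (p : Fin n → Step) : Decidable (IsPartialMotzkin p) :=
  Nat.decidableBallLE n _

instance {n : ℕ} (p : Fin n → Step) : Decidable (IsMotzkin p) :=
  inferInstanceAs (Decidable (_ ∧ _))

/-- The weight of a weighted Motzkin path. -/
def pathWt {n : ℕ} (k t : ℕ) (p : Fin n → Step) : ℕ := ∏ i, (p i).wt k t

/-- Sum of the weights of all `(k,t)`-Motzkin paths of length `n`. -/
def motzkinWt (k t n : ℕ) : ℕ :=
  ∑ p ∈ Finset.univ.filter (fun p : Fin n → Step => IsMotzkin p), pathWt k t p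

/-- Sum of the weights of all partial `(k,t)`-Motzkin paths of length `n`
ending at height `h`. -/
def partialWt (k t n h : ℕ) : ℕ :=
  ∑ p ∈ Finset.univ.filter
      (fun p : Fin n → Step => IsPartialMotzkin p ∧ pathHeight p n = (h : ℤ)),
    pathWt k t p

/-
Weight each partial Motzkin path by its final height plus one. Appending a step to a path at
height `h ≥ 1` yields heights `h + 1`, `h - 1`, `h`, of total weight `3 (h + 1)`; at height `0`
the down step is forbidden and the other two give weight `2 + 1 = 3`. So the total weight
triples with each step, starting from `1` for the empty path.
-/

lemma pathHeight_of_length_le {n : ℕ} (p : Fin n → Step) {m : ℕ} (h : n ≤ m) :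
    pathHeight p m = pathHeight p n := by
  unfold pathHeight
  congr 1
  exact Finset.filter_congr fun i _ => iff_of_true (by omega) (by omega)

lemma pathHeight_le_length {n : ℕ} (p : Fin n → Step) : pathHeight p n ≤ n := by
  calc pathHeight p n ≤ ∑ _i ∈ Finset.univ.filter (fun i : Fin n => (i : ℕ) < n), (1 : ℤ) :=
        Finset.sum_le_sum fun i _ => by cases p i <;> simp [Step.val]
    _ ≤ n := by
        rw [Finset.sum_const, nsmul_one]
        exact_mod_cast (Finset.card_filter_le _ _).trans (by simp)

lemma pathHeight_snoc {n : ℕ} (p : Fin n → Step) (s : Step) (m : ℕ) :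
    pathHeight (Fin.snoc p s) m = pathHeight p m + if n < m then s.val else 0 := by
  unfold pathHeight
  rw [Finset.sum_filter, Finset.sum_filter, Fin.sum_univ_castSucc]
  simp

lemma pathHeight_snoc_length {n : ℕ} (p : Fin n → Step) (s : Step) :
    pathHeight (Fin.snoc p s) (n + 1) = pathHeight p n + s.val := by
  rw [pathHeight_snoc, if_pos n.lt_succ_self, pathHeight_of_length_le p n.le_succ]

lemma isPartialMotzkin_snoc {n : ℕ} (p : Fin n → Step) (s : Step) :
    IsPartialMotzkin (Fin.snoc p s) ↔ IsPartialMotzkin p ∧ 0 ≤ pathHeight p n + s.val := by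
  constructor
  · intro h
    refine ⟨fun m hm => ?_, pathHeight_snoc_length p s ▸ h (n + 1) le_rfl⟩
    simpa [pathHeight_snoc, not_lt.2 hm] using h m (hm.trans n.le_succ)
  · rintro ⟨hp, hlast⟩ m hm
    rcases hm.lt_or_eq with hm | rfl
    · simpa [pathHeight_snoc, not_lt.2 (Nat.lt_succ_iff.mp hm)] using
        hp m (Nat.lt_succ_iff.mp hm)
    · rwa [pathHeight_snoc_length]

lemma Step.sum_univ {M : Type*} [AddCommMonoid M] (f : Step → M) :
    ∑ s : Step, f s = f .U + f .D + f .H := by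
  change ∑ s ∈ {Step.U, Step.D, Step.H}, f s = _
  rw [Finset.sum_insert (by decide), Finset.sum_insert (by decide), Finset.sum_singleton,
    add_assoc]

lemma sum_step_weight_of_nonneg {h : ℤ} (hh : 0 ≤ h) :
    ∑ s : Step, (if 0 ≤ h + s.val then h + s.val + 1 else 0) = 3 * (h + 1) := by
  rw [Step.sum_univ]
  simp only [Step.val]
  split_ifs <;> omega

def heightWeight (n : ℕ) : ℤ :=
  ∑ p : Fin n → Step, if IsPartialMotzkin p then pathHeight p n + 1 else 0

lemma heightWeight_succ (n : ℕ) : heightWeight (n + 1) = 3 * heightWeight n := by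
  rw [heightWeight, ← (Fin.snocEquiv fun _ => Step).sum_comp, Fintype.sum_prod_type_right,
    heightWeight, Finset.mul_sum]
  refine Finset.sum_congr rfl fun p _ => ?_
  have snocEquiv_apply (s : Step) : Fin.snocEquiv (fun _ => Step) (s, p) = Fin.snoc p s := rfl
  simp only [snocEquiv_apply, isPartialMotzkin_snoc, pathHeight_snoc_length]
  by_cases hp : IsPartialMotzkin p
  · simpa only [hp, true_and, if_true] using sum_step_weight_of_nonneg (hp n le_rfl)
  · simp [hp]

lemma heightWeight_eq_three_pow (n : ℕ) : heightWeight n = 3 ^ n := by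
  induction n with
  | zero => simp [heightWeight, IsPartialMotzkin, pathHeight]
  | succ n ih => rw [heightWeight_succ, ih, pow_succ, mul_comm]

lemma sum_range_card_mul_eq_heightWeight (n : ℕ) :
    ((∑ h ∈ Finset.range (n + 1),
        (Finset.univ.filter
          (fun p : Fin n → Step => IsPartialMotzkin p ∧ pathHeight p n = (h : ℤ))).card *
          (h + 1) : ℕ) : ℤ) = heightWeight n := by
  rw [heightWeight, ← Finset.sum_filter,
    ← Finset.sum_fiberwise_of_maps_to (g := fun p => (pathHeight p n).toNat)
      (t := Finset.range (n + 1)) fun p hp => ?_]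
  · push_cast
    refine Finset.sum_congr rfl fun h _ => ?_
    rw [Finset.filter_filter, Finset.card_eq_sum_ones, Nat.cast_sum, Finset.sum_mul]
    refine Finset.sum_congr (Finset.filter_congr fun p _ => ?_) fun p hp => ?_
    · exact and_congr_right fun hp => by have := hp n le_rfl; omega
    · obtain ⟨hpm, hheight⟩ := (Finset.mem_filter.mp hp).2
      have := hpm n le_rfl
      push_cast
      omega
  · have := (Finset.mem_filter.mp hp).2 n le_rfl
    have := pathHeight_le_length p
    simp only [Finset.mem_range]
    omega

/-- `∑_{h=0}^n #{partial Motzkin paths of length n ending at height h} · (h+1) = 3^n`. -/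
theorem stmt_13 (n : ℕ) :
    ∑ h ∈ Finset.range (n + 1),
        (Finset.univ.filter
          (fun p : Fin n → Step => IsPartialMotzkin p ∧ pathHeight p n = (h : ℤ))).card *
          (h + 1) =
      3 ^ n := by
  exact_mod_cast (sum_range_card_mul_eq_heightWeight n).trans (heightWeight_eq_three_pow n)
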